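/- arXiv:2001.08407 — 3 statements merged into one kernel-verified Lean document; each statement's English description precedes it below -/
import Mathlib

section
/- For subsets S ⊆ T of [n] and a partition π of [n], define A'(S,π) = 2^{-‖π|_S‖}, where ‖π|_S‖ is the number of blocks of the restriction of π to S. Then for every S ⊆ [n] and every partition π of [n], the alternating sum ∑_{T : S ⊆ T ⊆ [n]} (-1)^{|T|-|S|} A'(T,π) equals 2^{-‖π‖} if π refines the indicator string 1^S 0^{[n]\S} (i.e., every block of π is contained in S or in its complement), and 0 otherwise. -/
open Finset

/-- The number of blocks of the restriction of `π` to `S`. -/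
def restBlocks {n : ℕ} (π : Finpartition (univ : Finset (Fin n))) (S : Finset (Fin n)) : ℕ :=
  (π.parts.filter (fun b => (b ∩ S).Nonempty)).card

private lemma alt_sum_real {α : Type*} [DecidableEq α] (x : Finset α) :
    ∑ m ∈ x.powerset, (-1 : ℝ) ^ m.card = if x = ∅ then 1 else 0 := by
  have h := Finset.sum_powerset_neg_one_pow_card (x := x)
  have h2 : ((∑ m ∈ x.powerset, (-1 : ℤ) ^ m.card : ℤ) : ℝ)
      = ∑ m ∈ x.powerset, (-1 : ℝ) ^ m.card := by push_cast; rfl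
  rw [← h2, h]
  split_ifs <;> simp

private lemma interval_sum {α : Type*} [DecidableEq α] (S V : Finset α) :
    ∑ T ∈ V.powerset.filter (fun T => S ⊆ T), (-1 : ℝ) ^ (T.card - S.card)
      = if V = S then 1 else 0 := by
  by_cases hSV : S ⊆ V
  · have key : ∑ T ∈ V.powerset.filter (fun T => S ⊆ T), (-1 : ℝ) ^ (T.card - S.card)
        = ∑ D ∈ (V \ S).powerset, (-1 : ℝ) ^ D.card := by
      refine Finset.sum_bij' (fun T _ => T \ S) (fun D _ => D ∪ S) ?_ ?_ ?_ ?_ ?_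
      · intro T hT
        simp only [mem_filter, mem_powerset] at hT ⊢
        exact sdiff_subset_sdiff hT.1 (le_refl S)
      · intro D hD
        simp only [mem_powerset] at hD
        simp only [mem_filter, mem_powerset]
        constructor
        · apply union_subset (hD.trans (sdiff_subset)) hSV
        · exact subset_union_right
      · intro T hT
        simp only [mem_filter, mem_powerset] at hT
        exact sdiff_union_of_subset hT.2
      · intro D hD
        simp only [mem_powerset] at hD
        have hdisj : Disjoint D S := sdiff_disjoint.mono_left hD
        show (D ∪ S) \ S = D
        rw [union_sdiff_right, sdiff_eq_self_of_disjoint hdisj]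
      · intro T hT
        simp only [mem_filter, mem_powerset] at hT
        rw [card_sdiff_of_subset hT.2]
    rw [key, alt_sum_real]
    have : V \ S = ∅ ↔ V = S := by
      rw [sdiff_eq_empty_iff_subset]
      exact ⟨fun h => subset_antisymm h hSV, fun h => h.le⟩
    split_ifs with h1 h2 h2 <;> simp_all
  · have hne : V ≠ S := fun h => hSV (h ▸ le_refl V)
    rw [if_neg hne]
    apply Finset.sum_eq_zero
    intro T hT
    simp only [mem_filter, mem_powerset] at hT
    exact absurd (hT.2.trans hT.1) hSV

private lemma count_supersets {α : Type*} [DecidableEq α] {M P : Finset α} (h : M ⊆ P) :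
    (P.powerset.filter (fun C => M ⊆ C)).card = 2 ^ (P.card - M.card) := by
  have : (P.powerset.filter (fun C => M ⊆ C)).card = (P \ M).powerset.card := by
    refine Finset.card_bij' (fun C _ => C \ M) (fun D _ => D ∪ M) ?_ ?_ ?_ ?_
    · intro C hC
      simp only [mem_filter, mem_powerset] at hC ⊢
      exact sdiff_subset_sdiff hC.1 (le_refl M)
    · intro D hD
      simp only [mem_powerset] at hD
      simp only [mem_filter, mem_powerset]
      exact ⟨union_subset (hD.trans sdiff_subset) h, subset_union_right⟩
    · intro C hC
      simp only [mem_filter, mem_powerset] at hC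
      exact sdiff_union_of_subset hC.2
    · intro D hD
      simp only [mem_powerset] at hD
      have hdisj : Disjoint D M := sdiff_disjoint.mono_left hD
      show (D ∪ M) \ M = D
      rw [union_sdiff_right, sdiff_eq_self_of_disjoint hdisj]
  rw [this, card_powerset, card_sdiff_of_subset h]

private lemma subset_sup_iff {n : ℕ} (π : Finpartition (univ : Finset (Fin n)))
    (T : Finset (Fin n)) {C : Finset (Finset (Fin n))} (hC : C ⊆ π.parts) :
    T ⊆ C.sup id ↔ π.parts.filter (fun b => (b ∩ T).Nonempty) ⊆ C := by
  constructor
  · intro hT b hb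
    simp only [mem_filter] at hb
    obtain ⟨hbP, x, hx⟩ := hb
    rw [mem_inter] at hx
    have hx2 : x ∈ C.sup id := hT hx.2
    rw [Finset.mem_sup] at hx2
    obtain ⟨c, hcC, hxc⟩ := hx2
    rwa [π.eq_of_mem_parts hbP (hC hcC) hx.1 hxc]
  · intro hMC x hx
    obtain ⟨b, hbP, hxb⟩ := π.exists_mem (Finset.mem_univ x)
    have hbM : b ∈ π.parts.filter (fun b => (b ∩ T).Nonempty) := by
      simp only [mem_filter]
      exact ⟨hbP, ⟨x, mem_inter.2 ⟨hxb, hx⟩⟩⟩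
    rw [Finset.mem_sup]
    exact ⟨b, hMC hbM, hxb⟩

private lemma pow_restBlocks_eq {n : ℕ} (π : Finpartition (univ : Finset (Fin n)))
    (T : Finset (Fin n)) :
    (2 : ℝ)⁻¹ ^ restBlocks π T
      = ((π.parts.powerset.filter (fun C => T ⊆ C.sup id)).card : ℝ)
        * (2 : ℝ)⁻¹ ^ π.parts.card := by
  have hfil : π.parts.powerset.filter (fun C => T ⊆ C.sup id)
      = π.parts.powerset.filter
          (fun C => π.parts.filter (fun b => (b ∩ T).Nonempty) ⊆ C) := by
    apply Finset.filter_congr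
    intro C hC
    simp only [mem_powerset] at hC
    simp [subset_sup_iff π T hC]
  rw [hfil, count_supersets (filter_subset _ _)]
  have hr : restBlocks π T ≤ π.parts.card := card_filter_le _ _
  have h2 : (2 : ℝ) ^ π.parts.card
      = 2 ^ (π.parts.card - restBlocks π T) * 2 ^ restBlocks π T := by
    rw [← pow_add, Nat.sub_add_cancel hr]
  rw [restBlocks] at *
  push_cast
  rw [inv_pow, inv_pow, h2]
  have : (2 : ℝ) ^ (π.parts.card - (π.parts.filter (fun b => (b ∩ T).Nonempty)).card) ≠ 0 :=
    by positivity
  field_simp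

private lemma count_sup_eq {n : ℕ} (π : Finpartition (univ : Finset (Fin n)))
    (S : Finset (Fin n)) :
    (π.parts.powerset.filter (fun C => C.sup id = S)).card
      = if ∀ b ∈ π.parts, b ⊆ S ∨ b ⊆ Sᶜ then 1 else 0 := by
  split_ifs with hpure
  · rw [Finset.card_eq_one]
    refine ⟨π.parts.filter (fun b => b ⊆ S), ?_⟩
    have hsup : (π.parts.filter (fun b => b ⊆ S)).sup id = S := by
      apply subset_antisymm
      · intro x hx
        rw [Finset.mem_sup] at hx
        obtain ⟨c, hc, hxc⟩ := hx
        simp only [mem_filter] at hc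
        exact hc.2 hxc
      · intro x hx
        obtain ⟨b, hbP, hxb⟩ := π.exists_mem (Finset.mem_univ x)
        have hbS : b ⊆ S := by
          rcases hpure b hbP with h | h
          · exact h
          · exact absurd (h hxb) (by simp [hx])
        rw [Finset.mem_sup]
        exact ⟨b, mem_filter.2 ⟨hbP, hbS⟩, hxb⟩
    ext C
    simp only [mem_filter, mem_powerset, mem_singleton]
    constructor
    · rintro ⟨hCP, hCS⟩
      apply subset_antisymm
      · intro c hc
        simp only [mem_filter]
        exact ⟨hCP hc, hCS ▸ (Finset.le_sup (f := id) hc)⟩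
      · intro b hb
        simp only [mem_filter] at hb
        obtain ⟨x, hxb⟩ := π.nonempty_of_mem_parts hb.1
        have hxS : x ∈ S := hb.2 hxb
        rw [← hCS, Finset.mem_sup] at hxS
        obtain ⟨c, hcC, hxc⟩ := hxS
        rwa [π.eq_of_mem_parts hb.1 (hCP hcC) hxb hxc]
    · rintro rfl
      exact ⟨filter_subset _ _, hsup⟩
  · rw [Finset.card_eq_zero]
    rw [Finset.filter_eq_empty_iff]
    intro C hC hCS
    simp only [mem_powerset] at hC
    apply hpure
    intro b hbP
    by_cases hb : (b ∩ S).Nonempty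
    · left
      obtain ⟨x, hx⟩ := hb
      rw [mem_inter] at hx
      have hx2 : x ∈ C.sup id := hCS ▸ hx.2
      rw [Finset.mem_sup] at hx2
      obtain ⟨c, hcC, hxc⟩ := hx2
      have : b = c := π.eq_of_mem_parts hbP (hC hcC) hx.1 hxc
      subst this
      exact hCS ▸ Finset.le_sup (f := id) hcC
    · right
      intro x hxb
      rw [Finset.mem_compl]
      intro hxS
      exact hb ⟨x, mem_inter.2 ⟨hxb, hxS⟩⟩

theorem stmt0 (n : ℕ) (π : Finpartition (univ : Finset (Fin n))) (S : Finset (Fin n)) :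
    ∑ T ∈ univ.powerset.filter (fun T => S ⊆ T),
        (-1 : ℝ) ^ (T.card - S.card) * (2 : ℝ)⁻¹ ^ restBlocks π T
      = if ∀ b ∈ π.parts, b ⊆ S ∨ b ⊆ Sᶜ then (2 : ℝ)⁻¹ ^ π.parts.card else 0 := by
  classical
  have step1 : ∑ T ∈ univ.powerset.filter (fun T => S ⊆ T),
        (-1 : ℝ) ^ (T.card - S.card) * (2 : ℝ)⁻¹ ^ restBlocks π T
      = ∑ T ∈ univ.powerset.filter (fun T => S ⊆ T),
          ∑ C ∈ π.parts.powerset,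
            (if T ⊆ C.sup id then
              (-1 : ℝ) ^ (T.card - S.card) * (2 : ℝ)⁻¹ ^ π.parts.card else 0) := by
    apply Finset.sum_congr rfl
    intro T _
    rw [pow_restBlocks_eq π T, ← Finset.sum_filter, Finset.sum_const, nsmul_eq_mul]
    ring
  rw [step1, Finset.sum_comm]
  have step2 : ∀ C ∈ π.parts.powerset,
      ∑ T ∈ univ.powerset.filter (fun T => S ⊆ T),
          (if T ⊆ C.sup id then
            (-1 : ℝ) ^ (T.card - S.card) * (2 : ℝ)⁻¹ ^ π.parts.card else 0)
        = (if C.sup id = S then (1 : ℝ) else 0) * (2 : ℝ)⁻¹ ^ π.parts.card := by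
    intro C _
    rw [← Finset.sum_filter, Finset.filter_filter]
    have hfil : (univ.powerset.filter (fun T => S ⊆ T ∧ T ⊆ C.sup id))
        = (C.sup id).powerset.filter (fun T => S ⊆ T) := by
      ext T
      simp only [mem_filter, mem_powerset]
      constructor
      · rintro ⟨_, h1, h2⟩; exact ⟨h2, h1⟩
      · rintro ⟨h1, h2⟩; exact ⟨subset_univ T, h2, h1⟩
    rw [hfil, ← Finset.sum_mul, interval_sum S (C.sup id)]
  rw [Finset.sum_congr rfl step2, ← Finset.sum_mul, ← Finset.sum_filter,
    Finset.sum_const, nsmul_eq_mul, mul_one, count_sup_eq π S]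
  split_ifs <;> simp
end

section
/- Let n ∈ ℕ, let π be a partition of [n], and let S ⊆ [n]. Write T_1,…,T_m for the blocks of π|_S. Then ∑_{S' ⊆ S} 2^{|S'|} (-1)^{|S|-|S'|} · 2^{-‖π|_{S'}‖} = 1 if every block of π|_S has even size, and 0 otherwise. Equivalently, 2^{|S|} ∑_{S' ⊆ S} (-1/2)^{|S|-|S'|} 2^{-‖π|_{S'}‖} = ∏_{i=1}^m (1+(-1)^{|T_i|}) · (1/2)^{|T_i|+1} · 2^{|S|}, which equals the indicator that all |T_i| are even. -/
open Finset

lemma sum_powerset_union' {α M : Type*} [DecidableEq α] [AddCommMonoid M] {s t : Finset α}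
    (h : Disjoint s t) (f : Finset α → M) :
    ∑ u ∈ (s ∪ t).powerset, f u = ∑ p ∈ s.powerset ×ˢ t.powerset, f (p.1 ∪ p.2) := by
  have hinv : ∀ u ∈ (s ∪ t).powerset, u ∩ s ∪ u ∩ t = u := by
    intro u hu
    rw [← Finset.inter_union_distrib_left, Finset.inter_eq_left.2 (mem_powerset.1 hu)]
  refine Finset.sum_nbij' (i := fun u => (u ∩ s, u ∩ t)) (j := fun p => p.1 ∪ p.2) ?_ ?_ ?_ ?_ ?_
  · intro u hu
    simp [Finset.mem_product, inter_subset_right]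
  · intro p hp
    simp only [Finset.mem_product, mem_powerset] at hp
    exact mem_powerset.2 (union_subset_union hp.1 hp.2)
  · exact hinv
  · rintro ⟨a, b⟩ hp
    simp only [Finset.mem_product, mem_powerset] at hp
    have h1 : (a ∪ b) ∩ s = a := by
      rw [Finset.union_inter_distrib_right, Finset.inter_eq_left.2 hp.1,
        (Finset.disjoint_iff_inter_eq_empty.1 (h.symm.mono_left hp.2)), union_empty]
    have h2 : (a ∪ b) ∩ t = b := by
      rw [Finset.union_inter_distrib_right, Finset.inter_eq_left.2 hp.2,
        (Finset.disjoint_iff_inter_eq_empty.1 (h.mono_left hp.1)), empty_union]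
    simp [h1, h2]
  · intro u hu
    exact congrArg f (hinv u hu).symm

lemma block_sum {α : Type*} [DecidableEq α] (B : Finset α) :
    ∑ A ∈ B.powerset,
        (2 : ℝ) ^ A.card * (-1 : ℝ) ^ (B.card - A.card) *
          (2 : ℝ)⁻¹ ^ (if A.Nonempty then 1 else 0)
      = if Even B.card then 1 else 0 := by
  have h1 : ∀ A ∈ B.powerset,
      (2 : ℝ) ^ A.card * (-1 : ℝ) ^ (B.card - A.card) *
          (2 : ℝ)⁻¹ ^ (if A.Nonempty then 1 else 0)
        = (2 : ℝ) ^ A.card * (-1 : ℝ) ^ (B.card - A.card) * (2:ℝ)⁻¹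
          + (2 : ℝ) ^ A.card * (-1 : ℝ) ^ (B.card - A.card) * (if A = ∅ then (2:ℝ)⁻¹ else 0) := by
    intro A _
    rcases A.eq_empty_or_nonempty with rfl | hA
    · norm_num; ring
    · rw [if_pos hA, if_neg hA.ne_empty]; norm_num
  rw [Finset.sum_congr rfl h1, Finset.sum_add_distrib]
  have h2 : ∑ A ∈ B.powerset, (2 : ℝ) ^ A.card * (-1 : ℝ) ^ (B.card - A.card) = 1 := by
    have := Finset.prod_add (fun _ : α => (2:ℝ)) (fun _ => (-1:ℝ)) B
    simp only [Finset.prod_const] at this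
    norm_num at this
    rw [show ∑ A ∈ B.powerset, (2:ℝ)^A.card * (-1:ℝ)^(B.card - A.card)
        = ∑ A ∈ B.powerset, (2:ℝ)^A.card * (-1:ℝ)^(B \ A).card from
      Finset.sum_congr rfl fun A hA => by rw [Finset.card_sdiff_of_subset (mem_powerset.1 hA)]]
    exact this.symm
  have h3 : ∑ A ∈ B.powerset, (2 : ℝ) ^ A.card * (-1 : ℝ) ^ (B.card - A.card) *
      (if A = ∅ then (2:ℝ)⁻¹ else 0) = (-1:ℝ) ^ B.card * (2:ℝ)⁻¹ := by
    rw [Finset.sum_eq_single_of_mem ∅ (empty_mem_powerset B)]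
    · simp
    · intro A _ hA; simp [hA]
  rw [← Finset.sum_mul, h2, h3]
  rcases Nat.even_or_odd B.card with h | h
  · rw [if_pos h, h.neg_one_pow]; norm_num
  · rw [if_neg (Nat.not_even_iff_odd.2 h), h.neg_one_pow]; norm_num

theorem stmt1 (n : ℕ) (π : Finpartition (univ : Finset (Fin n))) (S : Finset (Fin n)) :
    ∑ S' ∈ S.powerset,
        (2 : ℝ) ^ S'.card * (-1 : ℝ) ^ (S.card - S'.card) * (2 : ℝ)⁻¹ ^ restBlocks π S'
      = if ∀ b ∈ π.parts, Even (b ∩ S).card then 1 else 0 := by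
  induction S using Finset.strongInduction with
  | _ S IH =>
  rcases S.eq_empty_or_nonempty with rfl | ⟨x, hx⟩
  · simp [restBlocks]
  · obtain ⟨b, hb, hxb⟩ := π.exists_mem (mem_univ x)
    set B := b ∩ S with hB
    set S₀ := S \ b with hS₀
    have hdisj : Disjoint B S₀ := by
      rw [Finset.disjoint_left]
      intro y hy hy'
      exact (Finset.mem_sdiff.1 hy').2 (Finset.mem_inter.1 hy).1
    have hunion : B ∪ S₀ = S := by
      ext y; simp only [hB, hS₀, mem_union, mem_inter, mem_sdiff]; tauto
    have hssub : S₀ ⊂ S := by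
      refine Finset.ssubset_iff_of_subset Finset.sdiff_subset |>.2 ⟨x, hx, ?_⟩
      simp [hS₀, hxb]
    have hcard : B.card + S₀.card = S.card := by
      rw [← Finset.card_union_of_disjoint hdisj, hunion]
    have hrest : ∀ A ∈ B.powerset, ∀ A' ∈ S₀.powerset,
        restBlocks π (A ∪ A') = restBlocks π A' + (if A.Nonempty then 1 else 0) := by
      intro A hA A' hA'
      rw [mem_powerset] at hA hA'
      have hAb : A ⊆ b := hA.trans (Finset.inter_subset_left)
      have hbA' : Disjoint b A' := by
        rw [Finset.disjoint_right]
        intro y hy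
        exact (Finset.mem_sdiff.1 (hA' hy)).2
      rcases A.eq_empty_or_nonempty with rfl | hAne
      · simp [restBlocks]
      · rw [if_pos hAne]
        unfold restBlocks
        have hfilter : π.parts.filter (fun b' => (b' ∩ (A ∪ A')).Nonempty)
            = insert b (π.parts.filter (fun b' => (b' ∩ A').Nonempty)) := by
          ext b'
          simp only [mem_filter, mem_insert]
          constructor
          · rintro ⟨hb', hne⟩
            obtain ⟨y, hy⟩ := hne
            rw [Finset.mem_inter, Finset.mem_union] at hy
            rcases hy.2 with hyA | hyA'
            · left
              exact π.disjoint.elim hb' hb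
                (Finset.not_disjoint_iff.2 ⟨y, hy.1, hAb hyA⟩)
            · right
              exact ⟨hb', ⟨y, Finset.mem_inter.2 ⟨hy.1, hyA'⟩⟩⟩
          · rintro (rfl | ⟨hb', hne⟩)
            · obtain ⟨y, hy⟩ := hAne
              exact ⟨hb, ⟨y, Finset.mem_inter.2 ⟨hAb hy, Finset.mem_union_left _ hy⟩⟩⟩
            · exact ⟨hb', hne.mono (Finset.inter_subset_inter le_rfl Finset.subset_union_right)⟩
        have hnot : b ∉ π.parts.filter (fun b' => (b' ∩ A').Nonempty) := by
          intro hmem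
          obtain ⟨-, y, hy⟩ := Finset.mem_filter.1 hmem
          rw [Finset.mem_inter] at hy
          exact Finset.disjoint_left.1 hbA' hy.1 hy.2
        rw [hfilter, Finset.card_insert_of_notMem hnot]
    have hcond : (∀ b' ∈ π.parts, Even (b' ∩ S).card)
        ↔ (Even B.card ∧ ∀ b' ∈ π.parts, Even (b' ∩ S₀).card) := by
      have hset : ∀ b' ∈ π.parts, b' ≠ b → b' ∩ S₀ = b' ∩ S := by
        intro b' hb' hbb
        have hd : Disjoint b' b := π.disjoint hb' hb hbb
        ext y
        simp only [hS₀, mem_inter, mem_sdiff]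
        exact ⟨fun h => ⟨h.1, h.2.1⟩,
          fun h => ⟨h.1, h.2, fun hyb => Finset.disjoint_left.1 hd h.1 hyb⟩⟩
      constructor
      · intro H
        refine ⟨H b hb, fun b' hb' => ?_⟩
        by_cases hbb : b' = b
        · subst hbb
          have : b' ∩ S₀ = ∅ := by
            ext y; simp [hS₀]
          simp [this]
        · rw [hset b' hb' hbb]; exact H b' hb'
      · rintro ⟨hBe, H⟩ b' hb'
        by_cases hbb : b' = b
        · subst hbb; exact hBe
        · rw [← hset b' hb' hbb]; exact H b' hb'
    have key : ∀ A ∈ B.powerset, ∀ A' ∈ S₀.powerset,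
        (2 : ℝ) ^ (A ∪ A').card * (-1 : ℝ) ^ ((B ∪ S₀).card - (A ∪ A').card)
            * (2 : ℝ)⁻¹ ^ restBlocks π (A ∪ A')
          = ((2 : ℝ) ^ A.card * (-1 : ℝ) ^ (B.card - A.card)
              * (2 : ℝ)⁻¹ ^ (if A.Nonempty then 1 else 0))
            * ((2 : ℝ) ^ A'.card * (-1 : ℝ) ^ (S₀.card - A'.card)
              * (2 : ℝ)⁻¹ ^ restBlocks π A') := by
      intro A hA A' hA'
      have hAB := Finset.card_le_card (mem_powerset.1 hA)
      have hA'S := Finset.card_le_card (mem_powerset.1 hA')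
      have hc : (A ∪ A').card = A.card + A'.card :=
        Finset.card_union_of_disjoint (hdisj.mono (mem_powerset.1 hA) (mem_powerset.1 hA'))
      have hsub : (B ∪ S₀).card - (A ∪ A').card
          = (B.card - A.card) + (S₀.card - A'.card) := by
        rw [hc, Finset.card_union_of_disjoint hdisj]; omega
      rw [hsub, hc, hrest A hA A' hA', pow_add, pow_add, pow_add]
      ring
    conv_lhs => rw [← hunion]
    rw [sum_powerset_union' hdisj, Finset.sum_product,
      Finset.sum_congr rfl (fun A hA => Finset.sum_congr rfl (fun A' hA' => key A hA A' hA')),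
      ← Finset.sum_mul_sum, block_sum, IH S₀ hssub]
    simp only [hcond]
    by_cases h1 : Even B.card <;> by_cases h2 : ∀ b' ∈ π.parts, Even (b' ∩ S₀).card <;>
      simp [h1, h2]
end

section
/- Let T be a tree on vertex set [n], and let B_n^T denote the set of partitions of [n] whose blocks induce connected subtrees of T. Define the square matrix A_T indexed by pairs (S, π) where S ⊆ [n] has even cardinality and π ∈ B_n^T, with A_T(S,π) = 1 if every block of π|_S has even size and 0 otherwise. Then the matrix B defined by B(S,π) = ∑_{π' ◁ π} (-1)^{‖π‖-‖π'‖} A_T(S,π') (sum over partitions π' refining π with blocks inducing connected subtrees) is a permutation matrix; in particular A_T is invertible and has full rank 2^{n-1}. -/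
/-!
Keeping only the edges of the tree `T` that lie inside blocks identifies the partitions of `[n]`
into `T`-connected blocks with the subsets `F` of the edge set of `T`: refinement becomes
inclusion and `‖π‖ = n - |F|`. Sending an edge set `F₀` to its set of odd-degree vertices
identifies the same subsets with the even subsets of `[n]`. If `S` is the odd-degree set of `F₀`,
every block of the partition given by `F` meets `S` evenly iff `F₀ ⊆ F`: a block meets `S`, mod 2,
in as many vertices as there are edges of `F₀` leaving it, and an edge of `F₀ \ F` is the only
edge of `F₀` leaving its side of the tree, which is a union of blocks. So `A` is the zeta matrix of
the Boolean lattice of edge sets, and the alternating sum defining `B` is its Möbius inversion.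
-/

open Finset

namespace Finpartition

variable {α : Type*} [DecidableEq α] {s : Finset α}

theorem le_iff_part_subset {P Q : Finpartition s} : P ≤ Q ↔ ∀ a ∈ s, P.part a ⊆ Q.part a := by
  refine ⟨fun h a ha => ?_, fun h b hb => ?_⟩
  · obtain ⟨c, hc, hPc⟩ := h (P.part_mem.2 ha)
    rwa [Q.part_eq_of_mem hc (hPc (P.mem_part ha))]
  · obtain ⟨a, ha⟩ := P.nonempty_of_mem_parts hb
    have has : a ∈ s := P.le hb ha
    exact ⟨Q.part a, Q.part_mem.2 has, P.part_eq_of_mem hb ha ▸ h a has⟩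

theorem even_card_inter_of_forall_parts (P : Finpartition s) {W S : Finset α} (hWs : W ⊆ s)
    (hW : ∀ b ∈ P.parts, b ⊆ W ∨ Disjoint b W) (hS : ∀ b ∈ P.parts, Even #(b ∩ S)) :
    Even #(W ∩ S) := by
  have hunion : W ∩ S = {b ∈ P.parts | b ⊆ W}.biUnion (· ∩ S) := by
    ext x
    simp only [mem_inter, mem_biUnion, mem_filter]
    constructor
    · rintro ⟨hxW, hxS⟩
      have hpart := P.part_mem.2 (hWs hxW)
      have hx := P.mem_part (hWs hxW)
      exact ⟨P.part x, ⟨hpart, (hW _ hpart).resolve_right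
        (not_disjoint_iff.2 ⟨x, hx, hxW⟩)⟩, hx, hxS⟩
    · rintro ⟨b, ⟨-, hbW⟩, hxb, hxS⟩
      exact ⟨hbW hxb, hxS⟩
  rw [hunion, card_biUnion]
  · exact even_sum _ fun b hb => hS b (mem_filter.1 hb).1
  · intro b hb c hc hbc
    exact (P.disjoint (mem_filter.1 hb).1 (mem_filter.1 hc).1 hbc).mono
      inter_subset_left inter_subset_left

end Finpartition

theorem Finset.sum_Icc_neg_one_pow_card_sub {α R : Type*} [DecidableEq α] [CommRing R]
    (s t : Finset α) : ∑ u ∈ Icc s t, (-1 : R) ^ (#t - #u) = if s = t then 1 else 0 := by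
  by_cases hst : s ⊆ t
  · have hsign : ∀ u ∈ (t \ s).powerset,
        (-1 : R) ^ (#t - #(s ∪ u)) = (-1) ^ #(t \ s) * (-1) ^ #u := by
      intro u hu
      rw [mem_powerset] at hu
      have hcard : #t - #(s ∪ u) + 2 * #u = #(t \ s) + #u := by
        rw [card_union_of_disjoint (disjoint_of_subset_right hu disjoint_sdiff),
          card_sdiff_of_subset hst]
        have := card_le_card hu
        rw [card_sdiff_of_subset hst] at this
        omega
      rw [← pow_add, ← hcard, pow_add, pow_mul, neg_one_sq, one_pow, mul_one]
    have hsum : ∑ u ∈ (t \ s).powerset, (-1 : R) ^ #u = if t \ s = ∅ then 1 else 0 := by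
      have := congrArg (Int.cast : ℤ → R) (sum_powerset_neg_one_pow_card (x := t \ s))
      push_cast at this
      exact this
    rw [Icc_eq_image_powerset hst, sum_image, sum_congr rfl hsign, ← mul_sum, hsum]
    · by_cases hts : s = t
      · simp [hts]
      · have hts' : ¬t ⊆ s := fun h => hts (hst.antisymm h)
        simp [sdiff_eq_empty_iff_subset, hts, hts']
    · intro u hu v hv huv
      simp only [coe_powerset, Set.mem_preimage, Set.mem_powerset_iff, coe_subset] at hu hv
      rw [← union_sdiff_cancel_left (disjoint_of_subset_right hu disjoint_sdiff),
        ← union_sdiff_cancel_left (disjoint_of_subset_right hv disjoint_sdiff)]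
      exact congrArg (· \ s) huv
  · rw [Icc_eq_empty hst, sum_empty, if_neg fun h => hst h.le]

theorem Fintype.card_subtype_even_card {α : Type*} [Fintype α] [DecidableEq α] [Nonempty α] :
    Fintype.card {s : Finset α // Even #s} = 2 ^ (Fintype.card α - 1) := by
  have hdiff : (#{s : Finset α | Even #s} : ℤ) - #{s : Finset α | ¬Even #s} = 0 := by
    have h := sum_powerset_neg_one_pow_card (x := (univ : Finset α))
    have hsign : ∀ s : Finset α, (-1 : ℤ) ^ #s = if Even #s then 1 else -1 := fun s => by
      rcases Nat.even_or_odd #s with hs | hs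
      · rw [if_pos hs, hs.neg_one_pow]
      · rw [if_neg (Nat.not_even_iff_odd.2 hs), hs.neg_one_pow]
    rw [if_neg univ_nonempty.ne_empty, powerset_univ] at h
    simp only [hsign, sum_ite, sum_const, nsmul_eq_mul, mul_one, mul_neg] at h
    linarith
  have htotal := card_filter_add_card_filter_not (s := (univ : Finset (Finset α)))
    fun s => Even #s
  rw [card_univ, Fintype.card_finset] at htotal
  have hpow : 2 ^ Fintype.card α = 2 * 2 ^ (Fintype.card α - 1) := by
    rw [← pow_succ', Nat.sub_add_cancel Fintype.card_pos]
  rw [Fintype.card_subtype]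
  omega

theorem Matrix.rank_eq_card_of_mul_eq {m n R : Type*} [Fintype m] [Fintype n] [DecidableEq m]
    [DecidableEq n] [CommSemiring R] [StrongRankCondition R] (A : Matrix m n R)
    (M : Matrix n n R) (e : m ≃ n) (h : ∀ i j, (A * M) i j = if j = e i then 1 else 0) :
    A.rank = Fintype.card m := by
  refine le_antisymm A.rank_le_card_height ?_
  calc Fintype.card m = (1 : Matrix m m R).rank := rank_one.symm
    _ = ((A * M).submatrix id e).rank := by
        congr 1
        ext i j
        rw [submatrix_apply, h, one_apply, id]
        exact if_congr (eq_comm.trans e.apply_eq_iff_eq.symm) rfl rfl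
    _ ≤ (A * M).rank := rank_submatrix_le _ _ _
    _ ≤ A.rank := rank_mul_le_left _ _

namespace SimpleGraph

section

variable {V : Type*} {G : SimpleGraph V}

theorem fromEdgeSet_le_deleteEdges {F : Set (Sym2 V)} (hF : F ⊆ G.edgeSet) {e : Sym2 V}
    (he : e ∉ F) : fromEdgeSet F ≤ G.deleteEdges {e} := fun x y h => by
  rw [fromEdgeSet_adj] at h
  exact (deleteEdges_adj).2 ⟨hF h.1, fun h' => he (Set.mem_singleton_iff.1 h' ▸ h.1)⟩

theorem IsAcyclic.reachable_fromEdgeSet_iff (hG : G.IsAcyclic) {F : Set (Sym2 V)}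
    (hF : F ⊆ G.edgeSet) {x y : V} (h : G.Adj x y) :
    (fromEdgeSet F).Reachable x y ↔ s(x, y) ∈ F := by
  refine ⟨fun hr => ?_, fun hxy => ((fromEdgeSet_adj _).2 ⟨hxy, h.ne⟩).reachable⟩
  by_contra he
  exact isAcyclic_iff_forall_adj_isBridge.1 hG h (hr.mono (fromEdgeSet_le_deleteEdges hF he))

variable [DecidableEq V] in
theorem odd_card_filter_mem_mk_iff {x y : V} (hxy : x ≠ y) (W : Finset V) :
    Odd #{v ∈ W | v ∈ s(x, y)} ↔ ¬(x ∈ W ↔ y ∈ W) := by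
  have hfilter : {v ∈ W | v ∈ s(x, y)} = {v ∈ W | v = x} ∪ {v ∈ W | v = y} := by
    ext v
    simp [Sym2.mem_iff, and_or_left]
  rw [hfilter, card_union_of_disjoint, filter_eq', filter_eq']
  · by_cases hx : x ∈ W <;> by_cases hy : y ∈ W <;> simp [hx, hy]
  · exact disjoint_filter.2 fun v _ hvx hvy => hxy (hvx.symm.trans hvy)

end

variable {V : Type*} [Fintype V] [DecidableEq V] {G : SimpleGraph V}

abbrev ConnectedPartition (G : SimpleGraph V) :=
  {π : Finpartition (univ : Finset V) // ∀ b ∈ π.parts, (G.induce (b : Set V)).Connected}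

noncomputable def componentPartition (F : Finset (Sym2 V)) : Finpartition (univ : Finset V) :=
  @Finpartition.ofSetoid V _ _ (fromEdgeSet (F : Set (Sym2 V))).reachableSetoid
    (Classical.decRel _)

theorem mem_part_componentPartition {F : Finset (Sym2 V)} {x y : V} :
    y ∈ (componentPartition F).part x ↔ (fromEdgeSet (F : Set (Sym2 V))).Reachable x y := by
  classical exact Finpartition.mem_part_ofSetoid_iff_rel

theorem induce_connected_of_mem_componentPartition {F : Finset (Sym2 V)}
    (hF : (F : Set (Sym2 V)) ⊆ G.edgeSet) {b : Finset V} (hb : b ∈ (componentPartition F).parts) :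
    (G.induce (b : Set V)).Connected := by
  set H := fromEdgeSet (F : Set (Sym2 V))
  obtain ⟨x, hx⟩ := (componentPartition F).nonempty_of_mem_parts hb
  have hsupp : (b : Set V) = (H.connectedComponentMk x).supp := by
    ext y
    rw [mem_coe, ← (componentPartition F).part_eq_of_mem hb hx, mem_part_componentPartition,
      ConnectedComponent.mem_supp_iff, ConnectedComponent.eq, reachable_comm]
  have hle : H ≤ G := fun u v h => hF ((fromEdgeSet_adj _).1 h).1
  rw [hsupp]
  exact (ConnectedComponent.maximal_connected_induce_supp _).prop.mono fun u v h => hle h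

def oddVertices (F : Finset (Sym2 V)) : Finset V :=
  {v | Odd #{e ∈ F | v ∈ e}}

theorem odd_card_inter_oddVertices_iff (F : Finset (Sym2 V)) (W : Finset V) :
    Odd #(W ∩ oddVertices F) ↔ Odd #{e ∈ F | Odd #{v ∈ W | v ∈ e}} := by
  have hW : W ∩ oddVertices F = {v ∈ W | Odd #{e ∈ F | v ∈ e}} := by
    ext v
    simp [oddVertices]
  rw [hW, ← odd_sum_iff_odd_card_odd, ← odd_sum_iff_odd_card_odd]
  exact Eq.to_iff (congrArg Odd (sum_card_bipartiteAbove_eq_sum_card_bipartiteBelow _))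

theorem even_card_inter_oddVertices {H : SimpleGraph V} {F : Finset (Sym2 V)}
    (hF : (F : Set (Sym2 V)) ⊆ H.edgeSet) {W : Finset V}
    (hW : ∀ ⦃x y⦄, H.Adj x y → x ∈ W → y ∈ W) : Even #(W ∩ oddVertices F) := by
  rw [← Nat.not_odd_iff_even, odd_card_inter_oddVertices_iff, filter_false_of_mem]
  · simp
  intro e he
  induction e with
  | _ x y =>
    have hxy : H.Adj x y := hF he
    rw [odd_card_filter_mem_mk_iff hxy.ne, not_not]
    exact ⟨hW hxy, hW hxy.symm⟩

variable [DecidableRel G.Adj]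

variable (G) in
def edgesWithin (π : Finpartition (univ : Finset V)) : Finset (Sym2 V) :=
  π.parts.biUnion fun b => G.edgeFinset ∩ b.sym2

theorem edgesWithin_subset (π : Finpartition (univ : Finset V)) :
    G.edgesWithin π ⊆ G.edgeFinset :=
  biUnion_subset.2 fun _ _ => inter_subset_left

theorem mk_mem_edgesWithin {π : Finpartition (univ : Finset V)} {x y : V} :
    s(x, y) ∈ G.edgesWithin π ↔ G.Adj x y ∧ π.part x = π.part y := by
  simp only [edgesWithin, mem_biUnion, mem_inter, mk_mem_sym2_iff, mem_edgeFinset, mem_edgeSet]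
  rw [← π.mem_part_iff_part_eq_part (mem_univ x) (mem_univ y), π.mem_part_iff_exists]
  grind

theorem edgesWithin_mono {π' π : Finpartition (univ : Finset V)} (h : π' ≤ π) :
    G.edgesWithin π' ⊆ G.edgesWithin π := by
  rw [Finpartition.le_iff_part_subset] at h
  intro e he
  induction e with
  | _ x y =>
    rw [mk_mem_edgesWithin] at he ⊢
    refine ⟨he.1, ?_⟩
    rw [← π.mem_part_iff_part_eq_part (mem_univ x) (mem_univ y)]
    exact h y (mem_univ y) (he.2 ▸ π'.mem_part (mem_univ x))

theorem part_eq_of_reachable_edgesWithin {π : Finpartition (univ : Finset V)} {x y : V}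
    (h : (fromEdgeSet (G.edgesWithin π : Set (Sym2 V))).Reachable x y) : π.part x = π.part y := by
  obtain ⟨p⟩ := h
  induction p with
  | nil => rfl
  | cons hadj _ ih => exact (mk_mem_edgesWithin.1 ((fromEdgeSet_adj _).1 hadj).1).2.trans ih

theorem reachable_edgesWithin_iff {π : Finpartition (univ : Finset V)}
    (hπ : ∀ b ∈ π.parts, (G.induce (b : Set V)).Connected) {x y : V} :
    (fromEdgeSet (G.edgesWithin π : Set (Sym2 V))).Reachable x y ↔ π.part x = π.part y := by
  refine ⟨part_eq_of_reachable_edgesWithin, fun h => ?_⟩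
  have hx : x ∈ π.part x := π.mem_part (mem_univ x)
  have hy : y ∈ π.part x := h ▸ π.mem_part (mem_univ y)
  let f : G.induce (π.part x : Set V) →g fromEdgeSet (G.edgesWithin π : Set (Sym2 V)) :=
    { toFun := Subtype.val
      map_rel' := fun {u v} (huv : G.Adj u v) => (fromEdgeSet_adj _).2
        ⟨mk_mem_edgesWithin.2 ⟨huv, ((π.part_eq_of_mem (π.part_mem.2 (mem_univ x)) u.2).trans
          (π.part_eq_of_mem (π.part_mem.2 (mem_univ x)) v.2).symm)⟩, huv.ne⟩ }
  exact ((hπ _ (π.part_mem.2 (mem_univ x))).preconnected ⟨x, hx⟩ ⟨y, hy⟩).map f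

theorem edgesWithin_subset_edgesWithin_iff {π' π : Finpartition (univ : Finset V)}
    (hπ' : ∀ b ∈ π'.parts, (G.induce (b : Set V)).Connected) :
    G.edgesWithin π' ⊆ G.edgesWithin π ↔ π' ≤ π := by
  refine ⟨fun h => Finpartition.le_iff_part_subset.2 fun x _ y hy => ?_, edgesWithin_mono⟩
  have hreach := ((reachable_edgesWithin_iff hπ').2
    ((π'.mem_part_iff_part_eq_part (mem_univ y) (mem_univ x)).1 hy).symm).mono
    (fromEdgeSet_mono (coe_subset.2 h))
  exact (π.mem_part_iff_part_eq_part (mem_univ y) (mem_univ x)).2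
    (part_eq_of_reachable_edgesWithin hreach).symm

theorem componentPartition_edgesWithin {π : Finpartition (univ : Finset V)}
    (hπ : ∀ b ∈ π.parts, (G.induce (b : Set V)).Connected) :
    componentPartition (G.edgesWithin π) = π := by
  have hpart : ∀ x, (componentPartition (G.edgesWithin π)).part x = π.part x := fun x => by
    ext y
    rw [mem_part_componentPartition, reachable_edgesWithin_iff hπ,
      π.mem_part_iff_part_eq_part (mem_univ y) (mem_univ x), eq_comm]
  exact le_antisymm (Finpartition.le_iff_part_subset.2 fun x _ => (hpart x).le)
    (Finpartition.le_iff_part_subset.2 fun x _ => (hpart x).ge)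

theorem IsAcyclic.edgesWithin_componentPartition (hG : G.IsAcyclic) {F : Finset (Sym2 V)}
    (hF : F ⊆ G.edgeFinset) : G.edgesWithin (componentPartition F) = F := by
  have hF' : (F : Set (Sym2 V)) ⊆ G.edgeSet := fun e he => mem_edgeFinset.1 (hF he)
  ext e
  induction e with
  | _ x y =>
    rw [mk_mem_edgesWithin, ← Finpartition.mem_part_iff_part_eq_part _ (mem_univ x) (mem_univ y),
      mem_part_componentPartition, reachable_comm]
    constructor
    · exact fun ⟨h, hr⟩ => (hG.reachable_fromEdgeSet_iff hF' h).1 hr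
    · intro he
      have h : G.Adj x y := hF' he
      exact ⟨h, (hG.reachable_fromEdgeSet_iff hF' h).2 he⟩

theorem IsAcyclic.card_parts_add_card_edgesWithin (hG : G.IsAcyclic)
    {π : Finpartition (univ : Finset V)} (hπ : ∀ b ∈ π.parts, (G.induce (b : Set V)).Connected) :
    #π.parts + #(G.edgesWithin π) = Fintype.card V := by
  have hblock : ∀ b ∈ π.parts, #(G.edgeFinset ∩ b.sym2) + 1 = #b := fun b hb => by
    have htree : (G.induce (b : Set V)).IsTree := ⟨hπ b hb, hG.induce _⟩
    calc #(G.edgeFinset ∩ b.sym2) + 1 = #(G.induce (b : Set V)).edgeFinset + 1 := by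
          have := congrArg card (map_edgeFinset_induce (G := G) (s := (b : Set V)))
          rw [card_map] at this
          simp only [Finset.toFinset_coe] at this
          convert congrArg (· + 1) this.symm
      _ = Fintype.card (b : Set V) := htree.card_edgeFinset
      _ = #b := Fintype.card_coe b
  rw [edgesWithin, card_biUnion, ← card_univ, ← π.sum_card_parts, ← sum_congr rfl hblock,
    sum_add_distrib, sum_const, smul_eq_mul, mul_one, add_comm]
  intro b hb c hc hbc
  refine (Finset.disjoint_left.2 fun e heb hec => ?_).mono inter_subset_right inter_subset_right
  induction e with
  | _ x y =>
    exact Finset.disjoint_left.1 (π.disjoint hb hc hbc) (mk_mem_sym2_iff.1 heb).1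
      (mk_mem_sym2_iff.1 hec).1

theorem even_card_inter_oddVertices_of_subset_edgesWithin {π : Finpartition (univ : Finset V)}
    {F₀ : Finset (Sym2 V)} (hF₀ : F₀ ⊆ G.edgesWithin π) {b : Finset V} (hb : b ∈ π.parts) :
    Even #(b ∩ oddVertices F₀) := by
  refine even_card_inter_oddVertices (H := fromEdgeSet (G.edgesWithin π : Set (Sym2 V)))
    (fun e he => ?_) fun x y hxy hx => ?_
  · rw [edgeSet_fromEdgeSet]
    exact ⟨hF₀ he, G.not_isDiag_of_mem_edgeSet (mem_edgeFinset.1 (edgesWithin_subset π (hF₀ he)))⟩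
  · rw [← π.part_eq_of_mem hb hx, π.mem_part_iff_part_eq_part (mem_univ y) (mem_univ x)]
    exact (part_eq_of_reachable_edgesWithin hxy.reachable).symm

theorem IsAcyclic.odd_card_side_inter_oddVertices (hG : G.IsAcyclic) {F₀ : Finset (Sym2 V)}
    (hF₀ : F₀ ⊆ G.edgeFinset) {u v : V} (he₀ : s(u, v) ∈ F₀) :
    Odd #(({w | (G.deleteEdges {s(u, v)}).Reachable u w} : Finset V) ∩ oddVertices F₀) := by
  have huv : G.Adj u v := mem_edgeFinset.1 (hF₀ he₀)
  rw [odd_card_inter_oddVertices_iff, card_eq_one.2 ⟨s(u, v), ?_⟩]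
  · exact odd_one
  ext f
  rw [mem_filter, mem_singleton]
  constructor
  · rintro ⟨hf, hfodd⟩
    by_contra hne
    induction f with
    | _ x y =>
      have hxy : (G.deleteEdges {s(u, v)}).Adj x y :=
        deleteEdges_adj.2 ⟨mem_edgeFinset.1 (hF₀ hf), hne⟩
      rw [odd_card_filter_mem_mk_iff hxy.ne] at hfodd
      simp only [mem_filter, mem_univ, true_and] at hfodd
      exact hfodd ⟨fun hx => hx.trans hxy.reachable, fun hy => hy.trans hxy.symm.reachable⟩
  · rintro rfl
    refine ⟨he₀, (odd_card_filter_mem_mk_iff huv.ne _).2 fun h => ?_⟩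
    simp only [mem_filter, mem_univ, true_and] at h
    exact isAcyclic_iff_forall_adj_isBridge.1 hG huv (h.1 Reachable.rfl)

theorem IsAcyclic.exists_odd_card_inter_oddVertices (hG : G.IsAcyclic)
    {π : Finpartition (univ : Finset V)} (hπ : ∀ b ∈ π.parts, (G.induce (b : Set V)).Connected)
    {F₀ : Finset (Sym2 V)} (hF₀ : F₀ ⊆ G.edgeFinset) {u v : V} (he₀ : s(u, v) ∈ F₀)
    (he : s(u, v) ∉ G.edgesWithin π) : ∃ b ∈ π.parts, Odd #(b ∩ oddVertices F₀) := by
  set H := G.deleteEdges {s(u, v)}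
  by_contra! heven
  refine Nat.not_even_iff_odd.2 (hG.odd_card_side_inter_oddVertices hF₀ he₀)
    (π.even_card_inter_of_forall_parts (subset_univ ({w | H.Reachable u w} : Finset V))
      (fun b hb => ?_) fun b hb => Nat.not_odd_iff_even.1 (heven b hb))
  -- `s(u, v)` lies in no block, so each block stays on one side of it
  have hreach : ∀ x ∈ b, ∀ y ∈ b, H.Reachable x y := fun x hx y hy =>
    ((reachable_edgesWithin_iff hπ).2 ((π.part_eq_of_mem hb hx).trans
      (π.part_eq_of_mem hb hy).symm)).mono
      (fromEdgeSet_le_deleteEdges (fun f hf => mem_edgeFinset.1 (edgesWithin_subset π hf)) he)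
  by_cases hbW : Disjoint b ({w | H.Reachable u w} : Finset V)
  · exact Or.inr hbW
  · obtain ⟨x, hxb, hxW⟩ := not_disjoint_iff.1 hbW
    simp only [mem_filter, mem_univ, true_and] at hxW
    exact Or.inl fun y hy => by simpa using hxW.trans (hreach x hxb y hy)

theorem IsAcyclic.forall_even_card_inter_oddVertices_iff (hG : G.IsAcyclic)
    {π : Finpartition (univ : Finset V)} (hπ : ∀ b ∈ π.parts, (G.induce (b : Set V)).Connected)
    {F₀ : Finset (Sym2 V)} (hF₀ : F₀ ⊆ G.edgeFinset) :
    (∀ b ∈ π.parts, Even #(b ∩ oddVertices F₀)) ↔ F₀ ⊆ G.edgesWithin π := by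
  refine ⟨fun h => ?_, fun h b hb => even_card_inter_oddVertices_of_subset_edgesWithin h hb⟩
  by_contra hsub
  obtain ⟨e, he₀, he⟩ := not_subset.1 hsub
  induction e with
  | _ u v =>
    obtain ⟨b, hb, hodd⟩ := hG.exists_odd_card_inter_oddVertices hπ hF₀ he₀ he
    exact Nat.not_even_iff_odd.2 hodd (h b hb)

@[simps]
noncomputable def IsAcyclic.connectedPartitionEquiv (hG : G.IsAcyclic) :
    G.ConnectedPartition ≃ {F : Finset (Sym2 V) // F ⊆ G.edgeFinset} where
  toFun π := ⟨G.edgesWithin π.1, edgesWithin_subset π.1⟩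
  invFun F := ⟨componentPartition F.1, fun _ hb =>
    induce_connected_of_mem_componentPartition (fun _ he => mem_edgeFinset.1 (F.2 he)) hb⟩
  left_inv π := Subtype.ext (componentPartition_edgesWithin π.2)
  right_inv F := Subtype.ext (hG.edgesWithin_componentPartition F.2)

theorem IsAcyclic.oddVertices_injOn (hG : G.IsAcyclic) :
    Set.InjOn oddVertices {F : Finset (Sym2 V) | F ⊆ G.edgeFinset} := by
  suffices h : ∀ ⦃F₁ F₂ : Finset (Sym2 V)⦄, F₁ ⊆ G.edgeFinset → F₂ ⊆ G.edgeFinset →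
      oddVertices F₁ = oddVertices F₂ → F₁ ⊆ F₂ from
    fun F₁ h₁ F₂ h₂ heq => (h h₁ h₂ heq).antisymm (h h₂ h₁ heq.symm)
  intro F₁ F₂ h₁ h₂ heq
  have hπ : ∀ b ∈ (componentPartition F₂).parts, (G.induce (b : Set V)).Connected := fun _ hb =>
    induce_connected_of_mem_componentPartition (fun _ he => mem_edgeFinset.1 (h₂ he)) hb
  have hF₂ := hG.edgesWithin_componentPartition h₂
  have heven := (hG.forall_even_card_inter_oddVertices_iff hπ h₂).2 hF₂.ge
  rw [← heq] at heven
  exact hF₂ ▸ (hG.forall_even_card_inter_oddVertices_iff hπ h₁).1 heven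

theorem even_card_oddVertices {F : Finset (Sym2 V)} (hF : F ⊆ G.edgeFinset) :
    Even #(oddVertices F) := by
  simpa using even_card_inter_oddVertices (W := univ) (fun e he => mem_edgeFinset.1 (hF he))
    fun _ _ _ _ => mem_univ _

noncomputable def IsTree.oddVerticesEquiv (hG : G.IsTree) :
    {F : Finset (Sym2 V) // F ⊆ G.edgeFinset} ≃ {S : Finset V // Even #S} :=
  Equiv.ofBijective (fun F => ⟨oddVertices F.1, even_card_oddVertices F.2⟩) <| by
    have := hG.connected.nonempty
    rw [Fintype.bijective_iff_injective_and_card, Fintype.card_subtype_even_card,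
      ← hG.card_edgeFinset, Nat.add_sub_cancel, ← card_powerset, ← Fintype.card_coe]
    refine ⟨fun F₁ F₂ h => Subtype.ext (hG.isAcyclic.oddVertices_injOn F₁.2 F₂.2
      (congrArg Subtype.val h)), Fintype.card_congr (Equiv.subtypeEquivRight fun F => ?_)⟩
    rw [mem_powerset]

open scoped Classical in
theorem IsAcyclic.sum_filter_le_neg_one_pow_mul_ite {R : Type*} [CommRing R] (hG : G.IsAcyclic)
    (π : G.ConnectedPartition) {F₀ : Finset (Sym2 V)} :
    ∑ π' ∈ {π' : G.ConnectedPartition | π'.1 ≤ π.1},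
        (-1 : R) ^ (#π'.1.parts - #π.1.parts) * (if F₀ ⊆ G.edgesWithin π'.1 then 1 else 0) =
      if F₀ = G.edgesWithin π.1 then 1 else 0 := by
  have hsign : ∀ π' : G.ConnectedPartition, π'.1 ≤ π.1 →
      (-1 : R) ^ (#π'.1.parts - #π.1.parts) * (if F₀ ⊆ G.edgesWithin π'.1 then 1 else 0) =
        if F₀ ⊆ G.edgesWithin π'.1 then (-1) ^ (#(G.edgesWithin π.1) - #(G.edgesWithin π'.1))
        else 0 := by
    intro π' hπ'
    have h₁ := hG.card_parts_add_card_edgesWithin π'.2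
    have h₂ := hG.card_parts_add_card_edgesWithin π.2
    have h₃ := card_le_card (edgesWithin_mono (G := G) hπ')
    rw [mul_ite, mul_one, mul_zero,
      show #π'.1.parts - #π.1.parts = #(G.edgesWithin π.1) - #(G.edgesWithin π'.1) by omega]
  rw [sum_congr rfl fun π' hπ' => hsign π' (mem_filter.1 hπ').2, ← sum_filter, filter_filter,
    ← sum_Icc_neg_one_pow_card_sub, ← sum_subtype_of_mem (p := (· ⊆ G.edgeFinset)) _
      fun F hF => (mem_Icc.1 hF).2.trans (edgesWithin_subset _)]
  refine sum_equiv hG.connectedPartitionEquiv (fun π' => ?_) fun _ _ => rfl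
  simp [mem_Icc, edgesWithin_subset_edgesWithin_iff π'.2, and_comm]

end SimpleGraph

open scoped Classical in
theorem stmt3_general (n : ℕ) (T : SimpleGraph (Fin n)) (hT : T.IsTree) :
    let ConnP := {π : Finpartition (univ : Finset (Fin n)) //
        ∀ b ∈ π.parts, (T.induce (b : Set (Fin n))).Connected}
    let EvenS := {S : Finset (Fin n) // Even S.card}
    let A : Matrix EvenS ConnP ℝ := fun S π =>
      if ∀ b ∈ π.1.parts, Even (b ∩ S.1).card then 1 else 0
    let B : Matrix EvenS ConnP ℝ := fun S π =>
      ∑ π' ∈ (Finset.univ : Finset ConnP).filter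
          (fun π' => ∀ b ∈ π'.1.parts, ∃ c ∈ π.1.parts, b ⊆ c),
        (-1 : ℝ) ^ (π'.1.parts.card - π.1.parts.card) * A S π'
    (∃ e : EvenS ≃ ConnP, ∀ S π, B S π = if π = e S then 1 else 0) ∧
      A.rank = 2 ^ (n - 1) := by
  intro ConnP EvenS A B
  have hTA := hT.isAcyclic
  let e : EvenS ≃ ConnP := hT.oddVerticesEquiv.symm.trans hTA.connectedPartitionEquiv.symm
  have hB : ∀ S π, B S π = if π = e S then 1 else 0 := by
    intro S π
    obtain ⟨F₀, rfl⟩ := hT.oddVerticesEquiv.surjective S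
    calc B (hT.oddVerticesEquiv F₀) π
        = ∑ π' ∈ {π' : T.ConnectedPartition | π'.1 ≤ π.1}, (-1 : ℝ) ^ (#π'.1.parts - #π.1.parts) *
            (if F₀.1 ⊆ T.edgesWithin π'.1 then 1 else 0) := by
          refine sum_congr (filter_congr fun _ _ => Iff.rfl) fun π' _ => congrArg _ ?_
          exact if_congr (hTA.forall_even_card_inter_oddVertices_iff π'.2 F₀.2) rfl rfl
      _ = if F₀.1 = T.edgesWithin π.1 then 1 else 0 := hTA.sum_filter_le_neg_one_pow_mul_ite π
      _ = if π = e (hT.oddVerticesEquiv F₀) then 1 else 0 := by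
          refine if_congr ?_ rfl rfl
          rw [Equiv.trans_apply, Equiv.symm_apply_apply, Equiv.eq_symm_apply, Subtype.ext_iff,
            eq_comm]
          rfl
  refine ⟨⟨e, hB⟩, ?_⟩
  let M : Matrix ConnP ConnP ℝ := fun π' π =>
    if ∀ b ∈ π'.1.parts, ∃ c ∈ π.1.parts, b ⊆ c then (-1) ^ (π'.1.parts.card - π.1.parts.card)
    else 0
  have := hT.connected.nonempty
  rw [Matrix.rank_eq_card_of_mul_eq A M e fun S π => ?_, Fintype.card_subtype_even_card,
    Fintype.card_fin]
  rw [← hB, Matrix.mul_apply]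
  simp only [B, M, sum_filter]
  exact sum_congr rfl fun π' _ => by split_ifs <;> ring

open scoped Classical in
theorem stmt3 (n : ℕ) (hn : 1 ≤ n) (T : SimpleGraph (Fin n)) (hT : T.IsTree) :
    let ConnP := {π : Finpartition (univ : Finset (Fin n)) //
        ∀ b ∈ π.parts, (T.induce (b : Set (Fin n))).Connected}
    let EvenS := {S : Finset (Fin n) // Even S.card}
    let A : Matrix EvenS ConnP ℝ := fun S π =>
      if ∀ b ∈ π.1.parts, Even (b ∩ S.1).card then 1 else 0
    let B : Matrix EvenS ConnP ℝ := fun S π =>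
      ∑ π' ∈ (Finset.univ : Finset ConnP).filter
          (fun π' => ∀ b ∈ π'.1.parts, ∃ c ∈ π.1.parts, b ⊆ c),
        (-1 : ℝ) ^ (π'.1.parts.card - π.1.parts.card) * A S π'
    (∃ e : EvenS ≃ ConnP, ∀ S π, B S π = if π = e S then 1 else 0) ∧
      A.rank = 2 ^ (n - 1) :=
  stmt3_general n T hT
end
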